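/- Let ū_h ∈ U, ȳ_h ∈ Y, and w̄_h ∈ W be such that αū_h is a subgradient of the norm ‖·‖_X at B*w̄_h (variational discretization); set ρ_y := Aȳ_h − Bū_h ∈ W* and D := (ζ̂ − αū_h)(B*(ŵ − w̄_h)), where ζ̂ is any subgradient of ‖·‖_X at B*ŵ. Then ‖Cȳ_h − Cȳ‖_G² ≤ (4/α)D + 4‖C(A⁻¹ρ_y)‖_G². -/

import Mathlib

/-!
Write `e = C yh - C ybar` and `ρ_y = A yh - B uh`. The adjoint equation for `ŵ` turns
`⟪C yh - gδ, C y⟫` into `-(A y) ŵ`, and `yh = A⁻¹ (B uh) + A⁻¹ ρ_y`; hence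
`‖e‖² = (ubar - uh)(B* ŵ) + ⟪gδ - C ybar, C (A⁻¹ (B uh)) - C ybar⟫ + ⟪e, C (A⁻¹ ρ_y)⟫`.
The middle term is `≤ 0` by the optimality of `ubar`, since `‖uh‖ ≤ 1/α` makes `uh` admissible.
Because `α ubar` lies in the unit ball of `X*` while `ζ̂` and `α uh` are subgradients of the norm,
`α (ubar - uh)(B* ŵ) ≤ D`, and Young's inequality absorbs the last term.
-/

open RealInnerProductSpace

section NormSubgradient

variable {X : Type*} [NormedAddCommGroup X] [NormedSpace ℝ X]

def IsNormSubgradient (ζ : StrongDual ℝ X) (x₀ : X) : Prop :=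
  ∀ x : X, ζ x - ζ x₀ ≤ ‖x‖ - ‖x₀‖

namespace IsNormSubgradient

variable {ζ η u : StrongDual ℝ X} {x y : X}

theorem apply_self (h : IsNormSubgradient ζ x) : ζ x = ‖x‖ := by
  have h0 := h 0
  have h2 := h ((2 : ℝ) • x)
  simp only [map_zero, norm_zero, map_smul, smul_eq_mul, norm_smul, Real.norm_ofNat] at h0 h2
  linarith

theorem apply_le (h : IsNormSubgradient ζ x) (z : X) : ζ z ≤ ‖z‖ := by
  linarith [h z, h.apply_self]

theorem norm_le_one (h : IsNormSubgradient ζ x) : ‖ζ‖ ≤ 1 :=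
  ζ.opNorm_le_bound zero_le_one fun z => by
    rw [one_mul, Real.norm_eq_abs, abs_le]
    exact ⟨by linarith [h.apply_le (-z), norm_neg z, map_neg ζ z], h.apply_le z⟩

theorem apply_sub_le (hζ : IsNormSubgradient ζ x) (hη : IsNormSubgradient η y) (hu : ‖u‖ ≤ 1) :
    u x - η x ≤ (ζ - η) (x - y) := by
  have hux : u x ≤ ‖x‖ := (le_abs_self _).trans (by simpa using u.le_of_opNorm_le hu x)
  simp only [sub_apply, map_sub]
  linarith [hζ.apply_self, hη.apply_self, hζ.apply_le y]

theorem sub_apply_sub_nonneg (hζ : IsNormSubgradient ζ x) (hη : IsNormSubgradient η y) :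
    0 ≤ (ζ - η) (x - y) := by
  simpa using hζ.apply_sub_le hη hη.norm_le_one

end IsNormSubgradient

end NormSubgradient

section InnerProductSpace

variable {F : Type*} [NormedAddCommGroup F] [InnerProductSpace ℝ F]

theorem real_inner_le_zero_of_forall_norm_sub_le {K : Set F} (hK : Convex ℝ K) {u v w : F}
    (hv : v ∈ K) (hmin : ∀ w ∈ K, ‖u - v‖ ≤ ‖u - w‖) (hw : w ∈ K) : ⟪u - v, w - v⟫ ≤ 0 := by
  have : Nonempty K := ⟨⟨v, hv⟩⟩
  refine (norm_eq_iInf_iff_real_inner_le_zero hK hv).1 (le_antisymm ?_ ?_) w hw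
  · exact le_ciInf fun w => hmin w w.2
  · exact ciInf_le ⟨0, Set.forall_mem_range.2 fun _ => norm_nonneg _⟩ (⟨v, hv⟩ : K)

theorem norm_sq_le_of_norm_sq_le_add_inner {e c : F} {d : ℝ} (h : ‖e‖ ^ 2 ≤ d + ⟪e, c⟫) :
    ‖e‖ ^ 2 ≤ 2 * d + ‖c‖ ^ 2 := by
  nlinarith [real_inner_le_norm e c, sq_nonneg (‖e‖ - ‖c‖)]

end InnerProductSpace

section IvanovProblem

variable {X G Y W : Type*} [NormedAddCommGroup X] [NormedSpace ℝ X]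
  [NormedAddCommGroup G] [InnerProductSpace ℝ G]
  [NormedAddCommGroup Y] [NormedSpace ℝ Y] [NormedAddCommGroup W] [NormedSpace ℝ W]
  {A : Y ≃L[ℝ] StrongDual ℝ W} {B : StrongDual ℝ X →L[ℝ] StrongDual ℝ W} {C : Y →L[ℝ] G}
  {gδ : G} {ubar : StrongDual ℝ X} {ybar : Y}

theorem real_inner_ivanov_optimality_le_zero {r : ℝ} (hubar : ‖ubar‖ ≤ r)
    (hybar : ybar = A.symm (B ubar))
    (hmin : ∀ u : StrongDual ℝ X, ‖u‖ ≤ r →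
      (1/2) * ‖C ybar - gδ‖^2 ≤ (1/2) * ‖C (A.symm (B u)) - gδ‖^2)
    {u : StrongDual ℝ X} (hu : ‖u‖ ≤ r) :
    ⟪gδ - C ybar, C (A.symm (B u)) - C ybar⟫ ≤ 0 := by
  let S : StrongDual ℝ X →L[ℝ] G := C ∘L A.symm.toContinuousLinearMap ∘L B
  have hK : Convex ℝ (S '' Metric.closedBall 0 r) :=
    (convex_closedBall 0 r).linear_image S.toLinearMap
  refine real_inner_le_zero_of_forall_norm_sub_le hK
    ⟨ubar, mem_closedBall_zero_iff.2 hubar, hybar ▸ rfl⟩ ?_ ⟨u, mem_closedBall_zero_iff.2 hu, rfl⟩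
  rintro _ ⟨v, hv, rfl⟩
  change ‖gδ - C ybar‖ ≤ ‖gδ - C (A.symm (B v))‖
  rw [norm_sub_rev, norm_sub_rev gδ]
  exact (pow_le_pow_iff_left₀ (norm_nonneg _) (norm_nonneg _) two_ne_zero).1 <| by
    linarith [hmin v (mem_closedBall_zero_iff.1 hv)]

variable {Astar : W ≃L[ℝ] StrongDual ℝ Y} {Bstar : W →L[ℝ] X} {Cstar : G →L[ℝ] StrongDual ℝ Y}
  {yh : Y} {what : W}

theorem real_inner_residual_eq_neg_apply_adjoint (hAadj : ∀ (y : Y) (w : W), A y w = Astar w y)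
    (hCadj : ∀ (y : Y) (g : G), ⟪C y, g⟫ = Cstar g y)
    (hwhat : what = Astar.symm (-(Cstar (C yh - gδ)))) (y : Y) :
    ⟪C yh - gδ, C y⟫ = -(A y what) := by
  rw [real_inner_comm, hCadj, hAadj, hwhat, Astar.apply_symm_apply]
  simp

theorem norm_sq_error_eq (hAadj : ∀ (y : Y) (w : W), A y w = Astar w y)
    (hB : ∀ (u : StrongDual ℝ X) (w : W), B u w = u (Bstar w))
    (hCadj : ∀ (y : Y) (g : G), ⟪C y, g⟫ = Cstar g y)
    (hybar : ybar = A.symm (B ubar)) (hwhat : what = Astar.symm (-(Cstar (C yh - gδ))))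
    (uh : StrongDual ℝ X) :
    ‖C yh - C ybar‖ ^ 2 = (ubar - uh) (Bstar what)
      + ⟪gδ - C ybar, C (A.symm (B uh)) - C ybar⟫
      + ⟪C yh - C ybar, C (A.symm (A yh - B uh))⟫ := by
  have hdual := real_inner_residual_eq_neg_apply_adjoint hAadj hCadj hwhat
  have hyh : C yh = C (A.symm (B uh)) + C (A.symm (A yh - B uh)) := by
    rw [← map_add, ← map_add, add_sub_cancel, A.symm_apply_apply]
  have hstate : C yh - C ybar = C (yh - ybar) := (map_sub C yh ybar).symm
  have hres : ⟪C yh - gδ, C yh - C ybar⟫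
      = (ubar - uh) (Bstar what) + ⟪C yh - gδ, C (A.symm (A yh - B uh))⟫ := by
    rw [hstate, hdual, hdual, A.apply_symm_apply, hybar, map_sub, A.apply_symm_apply]
    simp only [sub_apply, hB]
    ring
  calc ‖C yh - C ybar‖ ^ 2
      = ⟪C yh - gδ, C yh - C ybar⟫ + ⟪gδ - C ybar, C yh - C ybar⟫ := by
        rw [← inner_add_left, sub_add_sub_cancel, real_inner_self_eq_norm_sq]
    _ = _ := by
        rw [hres]
        nth_rw 2 [hyh]
        rw [add_sub_right_comm, inner_add_right]
        have := inner_add_left (𝕜 := ℝ) (C yh - gδ) (gδ - C ybar) (C (A.symm (A yh - B uh)))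
        rw [sub_add_sub_cancel] at this
        linarith

end IvanovProblem

theorem stmt_11_general
    {X G Y W : Type*}
    [NormedAddCommGroup X] [NormedSpace ℝ X]
    [NormedAddCommGroup G] [InnerProductSpace ℝ G]
    [NormedAddCommGroup Y] [NormedSpace ℝ Y]
    [NormedAddCommGroup W] [NormedSpace ℝ W]
    (A : Y ≃L[ℝ] StrongDual ℝ W) (Astar : W ≃L[ℝ] StrongDual ℝ Y)
    (hAadj : ∀ (y : Y) (w : W), A y w = Astar w y)
    (Bstar : W →L[ℝ] X) (B : StrongDual ℝ X →L[ℝ] StrongDual ℝ W)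
    (hB : ∀ (u : StrongDual ℝ X) (w : W), B u w = u (Bstar w))
    (C : Y →L[ℝ] G) (Cstar : G →L[ℝ] StrongDual ℝ Y)
    (hCadj : ∀ (y : Y) (g : G), ⟪C y, g⟫ = Cstar g y)
    (gδ : G) (α : ℝ) (hα : 0 < α)
    (ubar : StrongDual ℝ X) (ybar : Y)
    (hubar : ‖ubar‖ ≤ 1/α) (hybar : ybar = A.symm (B ubar))
    (hmin : ∀ u : StrongDual ℝ X, ‖u‖ ≤ 1/α →
      (1/2) * ‖C ybar - gδ‖^2 ≤ (1/2) * ‖C (A.symm (B u)) - gδ‖^2)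
    (yh : Y) (what : W)
    (hwhat : what = Astar.symm (-(Cstar (C yh - gδ))))
    (uh : StrongDual ℝ X) (wh : W)
    (hvar : ∀ x : X, (α • uh) x - (α • uh) (Bstar wh) ≤ ‖x‖ - ‖Bstar wh‖)
    (ζhat : StrongDual ℝ X)
    (hζhat : ∀ x : X, ζhat x - ζhat (Bstar what) ≤ ‖x‖ - ‖Bstar what‖) :
    ‖C yh - C ybar‖^2 ≤
      (4/α) * ((ζhat - α • uh) (Bstar (what - wh)))
      + 4 * ‖C (A.symm (A yh - B uh))‖^2 := by
  have hvar : IsNormSubgradient (α • uh) (Bstar wh) := hvar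
  have hζhat : IsNormSubgradient ζhat (Bstar what) := hζhat
  set D := (ζhat - α • uh) (Bstar (what - wh)) with hD_def
  have hD : 0 ≤ D := by
    rw [hD_def, map_sub]
    exact hζhat.sub_apply_sub_nonneg hvar
  have huh : ‖uh‖ ≤ 1 / α := by
    rw [le_div_iff₀ hα, mul_comm, ← Real.norm_of_nonneg hα.le, ← norm_smul]
    exact hvar.norm_le_one
  have hubar' : ‖α • ubar‖ ≤ 1 := by
    rwa [norm_smul, Real.norm_of_nonneg hα.le, ← le_div_iff₀' hα]
  have hcontrol : α * (ubar - uh) (Bstar what) ≤ D := by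
    rw [hD_def, map_sub]
    simpa only [map_sub, sub_apply, smul_apply, smul_eq_mul, mul_sub]
      using hζhat.apply_sub_le hvar hubar'
  have hVI := real_inner_ivanov_optimality_le_zero hubar hybar hmin huh
  set c := C (A.symm (A yh - B uh))
  have hbound : ‖C yh - C ybar‖ ^ 2 ≤ D / α + ⟪C yh - C ybar, c⟫ := by
    rw [norm_sq_error_eq hAadj hB hCadj hybar hwhat uh]
    linarith [(le_div_iff₀' hα).2 hcontrol, hVI]
  calc ‖C yh - C ybar‖ ^ 2 ≤ 2 * (D / α) + ‖c‖ ^ 2 := norm_sq_le_of_norm_sq_le_add_inner hbound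
    _ ≤ 4 / α * D + 4 * ‖c‖ ^ 2 := by
      rw [div_mul_eq_mul_div, mul_div_assoc]
      nlinarith [div_nonneg hD hα.le, sq_nonneg ‖c‖]

/-- A posteriori error estimate for Ivanov regularization under variational
discretization: the subgradient residual vanishes and only the Bregman term remains. -/
theorem stmt_11
    {X G Y W : Type*}
    [NormedAddCommGroup X] [NormedSpace ℝ X] [CompleteSpace X]
    [NormedAddCommGroup G] [InnerProductSpace ℝ G] [CompleteSpace G]
    [NormedAddCommGroup Y] [NormedSpace ℝ Y] [CompleteSpace Y]
    [NormedAddCommGroup W] [NormedSpace ℝ W] [CompleteSpace W]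
    (A : Y ≃L[ℝ] StrongDual ℝ W) (Astar : W ≃L[ℝ] StrongDual ℝ Y)
    (hAadj : ∀ (y : Y) (w : W), A y w = Astar w y)
    (Bstar : W →L[ℝ] X) (B : StrongDual ℝ X →L[ℝ] StrongDual ℝ W)
    (hB : ∀ (u : StrongDual ℝ X) (w : W), B u w = u (Bstar w))
    (C : Y →L[ℝ] G) (Cstar : G →L[ℝ] StrongDual ℝ Y)
    (hCadj : ∀ (y : Y) (g : G), ⟪C y, g⟫ = Cstar g y)
    (gδ : G) (α : ℝ) (hα : 0 < α)
    (ubar : StrongDual ℝ X) (ybar : Y)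
    (hubar : ‖ubar‖ ≤ 1/α) (hybar : ybar = A.symm (B ubar))
    (hmin : ∀ u : StrongDual ℝ X, ‖u‖ ≤ 1/α →
      (1/2) * ‖C ybar - gδ‖^2 ≤ (1/2) * ‖C (A.symm (B u)) - gδ‖^2)
    (yh : Y) (what : W)
    (hwhat : what = Astar.symm (-(Cstar (C yh - gδ))))
    (uh : StrongDual ℝ X) (wh : W)
    (hvar : ∀ x : X, (α • uh) x - (α • uh) (Bstar wh) ≤ ‖x‖ - ‖Bstar wh‖)
    (ζhat : StrongDual ℝ X)
    (hζhat : ∀ x : X, ζhat x - ζhat (Bstar what) ≤ ‖x‖ - ‖Bstar what‖) :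
    ‖C yh - C ybar‖^2 ≤
      (4/α) * ((ζhat - α • uh) (Bstar (what - wh)))
      + 4 * ‖C (A.symm (A yh - B uh))‖^2 :=
  stmt_11_general A Astar hAadj Bstar B hB C Cstar hCadj gδ α hα ubar ybar hubar hybar hmin yh what
    hwhat uh wh hvar ζhat hζhat
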